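/- With σ² = 2e(1−e)/n being the variance of each hold-out estimator, and the correlation structure ρ₁ (within two-fold pairs) and ρ₂ (across pairs), the 5×2 cross-validated estimator E_{5×2} = (1/10)∑_{j=1}^{5}∑_{k=1}^{2} E_k^{(j)} has variance (1 + ρ₁ + 8ρ₂)·e(1−e)/(5n). -/

import Mathlib

open MeasureTheory

/-- Covariance of two real random variables. -/
noncomputable def cov {Ω : Type*} [MeasurableSpace Ω] (μ : Measure Ω) (X Y : Ω → ℝ) : ℝ :=
  (∫ ω, X ω * Y ω ∂μ) - (∫ ω, X ω ∂μ) * (∫ ω, Y ω ∂μ)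

/-! Covariance is bilinear, so the variance of the total of the ten estimators is the sum of all
`10 × 10` covariances: ten variances `σ²`, ten within-pair covariances `ρ₁σ²` (each pair in both
orders) and eighty cross-pair covariances `ρ₂σ²`. Dividing by `10²` gives `σ²(1 + ρ₁ + 8ρ₂)/10`. -/

open ProbabilityTheory Finset

lemma cov_comm {Ω : Type*} [MeasurableSpace Ω] (μ : Measure Ω) (X Y : Ω → ℝ) :
    cov μ X Y = cov μ Y X := by
  simp only [cov, mul_comm]

lemma cov_eq_covariance {Ω : Type*} [MeasurableSpace Ω] {μ : Measure Ω} [IsProbabilityMeasure μ]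
    {X Y : Ω → ℝ} (hX : MemLp X 2 μ) (hY : MemLp Y 2 μ) : cov μ X Y = cov[X, Y; μ] := by
  rw [covariance_eq_sub hX hY]
  rfl

lemma sum_ite_eq_add_card_sub_one_mul {ι : Type*} [Fintype ι] [DecidableEq ι] (i : ι)
    (a b : ℝ) : ∑ j, (if i = j then a else b) = a + (Fintype.card ι - 1) * b := by
  have hsplit : ∀ j, (if i = j then a else b) = b + if i = j then a - b else 0 := by
    intro j; split_ifs <;> ring
  simp only [hsplit, sum_add_distrib, sum_ite_eq, mem_univ, if_true, sum_const, card_univ,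
    nsmul_eq_mul]
  ring

lemma covariance_sum_sum_of_block {Ω : Type*} [MeasurableSpace Ω] {μ : Measure Ω}
    [IsFiniteMeasure μ] {ι κ : Type*} [Fintype ι] [Fintype κ] [DecidableEq ι] [DecidableEq κ]
    {X : ι → κ → Ω → ℝ} (hX : ∀ i k, MemLp (X i k) 2 μ) {v a b : ℝ}
    (hcov : ∀ i k i' k', cov[X i k, X i' k'; μ] = if i = i' then (if k = k' then v else a) else b) :
    cov[fun ω ↦ ∑ i, ∑ k, X i k ω, fun ω ↦ ∑ i, ∑ k, X i k ω; μ]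
      = Fintype.card ι * Fintype.card κ
          * (v + (Fintype.card κ - 1) * a + (Fintype.card ι - 1) * Fintype.card κ * b) := by
  have hrow : ∀ i, MemLp (fun ω ↦ ∑ k, X i k ω) 2 μ :=
    fun i ↦ memLp_finsetSum _ fun k _ ↦ hX i k
  rw [covariance_fun_sum_fun_sum hrow hrow]
  simp only [covariance_fun_sum_fun_sum (hX _) (hX _), hcov, sum_ite_irrel,
    sum_ite_eq_add_card_sub_one_mul, sum_const, card_univ, nsmul_eq_mul]
  ring

theorem variance_E_5x2_general {Ω : Type*} [MeasurableSpace Ω] (μ : Measure Ω)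
    [IsProbabilityMeasure μ] (E : Fin 5 → Fin 2 → Ω → ℝ) (e ρ1 ρ2 n : ℝ)
    (hL2 : ∀ j k, MemLp (E j k) 2 μ)
    (hvar : ∀ j k, cov μ (E j k) (E j k) = 2 * e * (1 - e) / n)
    (hρ1 : ∀ j, cov μ (E j 0) (E j 1) = ρ1 * (2 * e * (1 - e) / n))
    (hρ2 : ∀ j j' k k', j ≠ j' → cov μ (E j k) (E j' k') = ρ2 * (2 * e * (1 - e) / n)) :
    cov μ (fun ω => (∑ j : Fin 5, ∑ k : Fin 2, E j k ω) / 10)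
        (fun ω => (∑ j : Fin 5, ∑ k : Fin 2, E j k ω) / 10)
      = (1 + ρ1 + 8 * ρ2) * (e * (1 - e)) / (5 * n) := by
  set σ2 := 2 * e * (1 - e) / n
  have hblock : ∀ j k j' k', cov[E j k, E j' k'; μ]
      = if j = j' then (if k = k' then σ2 else ρ1 * σ2) else ρ2 * σ2 := by
    intro j k j' k'
    rw [← cov_eq_covariance (hL2 j k) (hL2 j' k')]
    split_ifs with hj hk
    · subst hj hk; exact hvar j k
    · subst hj
      fin_cases k <;> fin_cases k'
      · exact absurd rfl hk
      · exact hρ1 j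
      · rw [cov_comm]; exact hρ1 j
      · exact absurd rfl hk
    · exact hρ2 j j' k k' hj
  have hsum : MemLp (fun ω ↦ (∑ j : Fin 5, ∑ k : Fin 2, E j k ω) / 10) 2 μ := by
    simpa only [div_eq_mul_inv] using
      (memLp_finsetSum _ fun j _ ↦ memLp_finsetSum _ fun k _ ↦ hL2 j k).mul_const 10⁻¹
  rw [cov_eq_covariance hsum hsum, covariance_fun_div_left, covariance_fun_div_right,
    covariance_sum_sum_of_block hL2 hblock]
  simp only [Fintype.card_fin, σ2]
  ring

/-- With `σ² = 2e(1-e)/n` the variance of each hold-out estimator, within-pair correlation `ρ₁`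
and cross-pair correlation `ρ₂`, the 5×2 cross-validated estimator
`E₅ₓ₂ = (1/10) ∑_{j,k} E_k^{(j)}` has variance `(1 + ρ₁ + 8ρ₂) e(1-e)/(5n)`. -/
theorem variance_E_5x2 {Ω : Type*} [MeasurableSpace Ω] (μ : Measure Ω)
    [IsProbabilityMeasure μ] (E : Fin 5 → Fin 2 → Ω → ℝ) (e ρ1 ρ2 n : ℝ) (hn : 0 < n)
    (he0 : 0 ≤ e) (he1 : e ≤ 1)
    (hmeas : ∀ j k, Measurable (E j k)) (hL2 : ∀ j k, MemLp (E j k) 2 μ)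
    (hvar : ∀ j k, cov μ (E j k) (E j k) = 2 * e * (1 - e) / n)
    (hρ1 : ∀ j, cov μ (E j 0) (E j 1) = ρ1 * (2 * e * (1 - e) / n))
    (hρ2 : ∀ j j' k k', j ≠ j' → cov μ (E j k) (E j' k') = ρ2 * (2 * e * (1 - e) / n)) :
    cov μ (fun ω => (∑ j : Fin 5, ∑ k : Fin 2, E j k ω) / 10)
        (fun ω => (∑ j : Fin 5, ∑ k : Fin 2, E j k ω) / 10)
      = (1 + ρ1 + 8 * ρ2) * (e * (1 - e)) / (5 * n) :=
  variance_E_5x2_general μ E e ρ1 ρ2 n hL2 hvar hρ1 hρ2
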